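/- arXiv:2511.11288 — 3 statements merged into one kernel-verified Lean document; each statement's English description precedes it below -/
import Mathlib

section
/- Let σ > 0, r ≥ 0 and T > 0. Define Π(v,t) = (1/v)·exp(−r(T−t) − 2v/(σ²(T−t))) for v > 0 and t < T. Then Π is a classical solution of the degenerate parabolic equation (vσ²/2)·∂²Π/∂v² + σ²·∂Π/∂v + ∂Π/∂t − rΠ = 0 at every point (v,t) with v > 0 and 0 ≤ t < T. -/
open Real

/-- The Heston–Loewenstein–Willard function
`Π(v,t) = (1/v)·exp(−r(T−t) − 2v/(σ²(T−t)))`. -/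
noncomputable def HLWpi (σ r T : ℝ) (v t : ℝ) : ℝ :=
  (1 / v) * Real.exp (-(r * (T - t)) - 2 * v / (σ ^ 2 * (T - t)))

lemma hlw_deriv_v (σ r T t : ℝ) (hσ : σ ≠ 0) (hτ : T - t ≠ 0) (v : ℝ) (hv : v ≠ 0) :
    HasDerivAt (fun v' => HLWpi σ r T v' t)
      ((-(1 / v ^ 2) - (1 / v) * (2 / (σ ^ 2 * (T - t)))) *
        Real.exp (-(r * (T - t)) - 2 * v / (σ ^ 2 * (T - t)))) v := by
  have h1 : HasDerivAt (fun v' : ℝ => 1 / v') (-(1 / v ^ 2)) v := by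
    simpa [one_div] using hasDerivAt_inv hv
  have hE : HasDerivAt (fun v' => -(r * (T - t)) - 2 * v' / (σ ^ 2 * (T - t)))
      (-(2 / (σ ^ 2 * (T - t)))) v := by
    have := (((hasDerivAt_id v).const_mul 2).div_const (σ ^ 2 * (T - t))).const_sub
      (-(r * (T - t)))
    simpa using this
  have h := h1.mul hE.exp
  simp only [HLWpi]
  exact h.congr_deriv (by ring)

/-- `Π` is a classical solution of
`(vσ²/2)·Π_vv + σ²·Π_v + Π_t − rΠ = 0` at every point `(v,t)` with
`v > 0`, `0 ≤ t < T`. -/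
theorem hlw_solves_volatility_equation (σ r T : ℝ) (hσ : 0 < σ) (hr : 0 ≤ r)
    (hT : 0 < T) (v t : ℝ) (hv : 0 < v) (ht0 : 0 ≤ t) (htT : t < T) :
    ∃ pv pvv pt : ℝ,
      HasDerivAt (fun v' => HLWpi σ r T v' t) pv v ∧
      HasDerivAt (deriv fun v' => HLWpi σ r T v' t) pvv v ∧
      HasDerivAt (fun t' => HLWpi σ r T v t') pt t ∧
      v * σ ^ 2 / 2 * pvv + σ ^ 2 * pv + pt - r * HLWpi σ r T v t = 0 := by
  have hτ : (0:ℝ) < T - t := by linarith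
  have hτ' : T - t ≠ 0 := ne_of_gt hτ
  have hσ' : σ ≠ 0 := ne_of_gt hσ
  have hst : σ ^ 2 * (T - t) ≠ 0 := mul_ne_zero (pow_ne_zero 2 hσ') hτ'
  set c : ℝ := 2 / (σ ^ 2 * (T - t)) with hc
  set E : ℝ := -(r * (T - t)) - 2 * v / (σ ^ 2 * (T - t)) with hEdef
  -- first derivative
  have hpv := hlw_deriv_v σ r T t hσ' hτ' v hv.ne'
  -- second derivative: differentiate g v' = (-(1/v'^2) - (1/v')*c) * exp(...)
  have hg : HasDerivAt (fun v' => (-(1 / v' ^ 2) - (1 / v') * c) *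
      Real.exp (-(r * (T - t)) - 2 * v' / (σ ^ 2 * (T - t))))
      ((2 / v ^ 3 + c / v ^ 2) * Real.exp E +
        (-(1 / v ^ 2) - (1 / v) * c) * Real.exp E * (-c)) v := by
    have h2 : HasDerivAt (fun v' : ℝ => 1 / v' ^ 2) (-(2 / v ^ 3)) v := by
      have := (hasDerivAt_pow 2 v).inv (pow_ne_zero 2 hv.ne')
      have hf : (fun v' : ℝ => 1 / v' ^ 2) = (fun x : ℝ => x ^ 2)⁻¹ := by
        funext x; simp [one_div]
      rw [hf]
      refine this.congr_deriv ?_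
      field_simp
      norm_num
      ring
    have h1 : HasDerivAt (fun v' : ℝ => 1 / v') (-(1 / v ^ 2)) v := by
      simpa [one_div] using hasDerivAt_inv hv.ne'
    have hA : HasDerivAt (fun v' : ℝ => -(1 / v' ^ 2) - (1 / v') * c)
        (2 / v ^ 3 + c / v ^ 2) v := by
      have := h2.neg.sub (h1.mul_const c)
      exact this.congr_deriv (by ring)
    have hE : HasDerivAt (fun v' => -(r * (T - t)) - 2 * v' / (σ ^ 2 * (T - t))) (-c) v := by
      have := (((hasDerivAt_id v).const_mul 2).div_const (σ ^ 2 * (T - t))).const_sub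
        (-(r * (T - t)))
      simpa [hc] using this
    have := hA.mul hE.exp
    exact this.congr_deriv (by rw [hEdef]; ring)
  have hev : (deriv fun v' => HLWpi σ r T v' t) =ᶠ[nhds v]
      (fun v' => (-(1 / v' ^ 2) - (1 / v') * c) *
        Real.exp (-(r * (T - t)) - 2 * v' / (σ ^ 2 * (T - t)))) := by
    filter_upwards [eventually_ne_nhds hv.ne'] with x hx
    rw [(hlw_deriv_v σ r T t hσ' hτ' x hx).deriv, hc]
  have hpvv : HasDerivAt (deriv fun v' => HLWpi σ r T v' t)
      ((2 / v ^ 3 + c / v ^ 2) * Real.exp E +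
        (-(1 / v ^ 2) - (1 / v) * c) * Real.exp E * (-c)) v :=
    hg.congr_of_eventuallyEq hev
  -- time derivative
  have hden : HasDerivAt (fun t' => σ ^ 2 * (T - t')) (σ ^ 2 * (-1)) t := by
    have := ((hasDerivAt_id t).const_sub T).const_mul (σ ^ 2)
    simpa using this
  have hnum : HasDerivAt (fun _ : ℝ => 2 * v) 0 t := hasDerivAt_const t (2 * v)
  have hEt : HasDerivAt (fun t' => -(r * (T - t')) - 2 * v / (σ ^ 2 * (T - t')))
      (r - 2 * v * σ ^ 2 / (σ ^ 2 * (T - t)) ^ 2) t := by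
    have hr1 : HasDerivAt (fun t' => r * (T - t')) (r * -1) t :=
      ((hasDerivAt_id t).const_sub T).const_mul r
    have hq := hnum.div hden hst
    have := hr1.neg.sub hq
    exact this.congr_deriv (by ring)
  have hpt : HasDerivAt (fun t' => HLWpi σ r T v t')
      ((1 / v) * (Real.exp E * (r - 2 * v * σ ^ 2 / (σ ^ 2 * (T - t)) ^ 2))) t := by
    have := (hEt.exp).const_mul (1 / v)
    simp only [HLWpi]
    convert this using 1
  refine ⟨_, _, _, hpv, hpvv, hpt, ?_⟩
  simp only [HLWpi, hc, hEdef]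
  have hex : Real.exp (-(r * (T - t)) - 2 * v / (σ ^ 2 * (T - t))) ≠ 0 := Real.exp_ne_zero _
  field_simp
  ring
end

section
/- There exists a function w : (0,∞) × (0,∞) → ℝ and a constant C > 0 such that: (i) w is a classical solution of w_τ = 2y³·w_yy at every point y > 0, τ > 0; (ii) w(y,τ) → 0 as τ → 0⁺ for every y > 0; (iii) 0 < w(y,τ) ≤ C·y for all y > 0, τ > 0; and (iv) w is not identically zero. Consequently, the Cauchy problem for w_τ = 2y³·w_yy on y > 0 with zero initial data has a nontrivial solution of (at most) linear growth, so the sublinear-growth uniqueness condition of Ekström–Tysk is sharp for the equation w_τ = a y^{2α} w_yy with α = 3/2. -/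
open Real Filter Topology

private lemma aux_ne (τ y : ℝ) (hy : 0 < y) (hτ : 0 < τ) : 2 * τ * y ≠ 0 := by
  positivity

/-- first space derivative -/
private lemma aux_dy (τ y : ℝ) (hy : 0 < y) (hτ : 0 < τ) :
    HasDerivAt (fun y' : ℝ => y' * Real.exp (-(2 * τ * y')⁻¹))
      (Real.exp (-(2 * τ * y)⁻¹) * (1 + (2 * τ * y)⁻¹)) y := by
  have hlin : HasDerivAt (fun y' : ℝ => 2 * τ * y') (2 * τ * 1) y :=
    (hasDerivAt_id y).const_mul (2 * τ)
  have hinv := hlin.inv (aux_ne τ y hy hτ)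
  have hexp := hinv.neg.exp
  have h := (hasDerivAt_id y).mul hexp
  refine h.congr_deriv ?_
  simp only [Pi.neg_apply, Pi.inv_apply, id]
  have h2 : (2 * τ * y) ^ 2 ≠ 0 := pow_ne_zero _ (aux_ne τ y hy hτ)
  field_simp

/-- second space derivative -/
private lemma aux_dyy (τ y : ℝ) (hy : 0 < y) (hτ : 0 < τ) :
    HasDerivAt (fun y' : ℝ => Real.exp (-(2 * τ * y')⁻¹) * (1 + (2 * τ * y')⁻¹))
      (Real.exp (-(2 * τ * y)⁻¹) / (4 * τ ^ 2 * y ^ 3)) y := by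
  have hlin : HasDerivAt (fun y' : ℝ => 2 * τ * y') (2 * τ * 1) y :=
    (hasDerivAt_id y).const_mul (2 * τ)
  have hinv := hlin.inv (aux_ne τ y hy hτ)
  have hexp := hinv.neg.exp
  have hone := hinv.const_add (1 : ℝ)
  have h := hexp.mul hone
  refine h.congr_deriv ?_
  simp only [Pi.neg_apply, Pi.inv_apply, id]
  have hτ0 : τ ≠ 0 := ne_of_gt hτ
  have hy0 : y ≠ 0 := ne_of_gt hy
  field_simp
  ring

/-- time derivative -/
private lemma aux_dt (τ y : ℝ) (hy : 0 < y) (hτ : 0 < τ) :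
    HasDerivAt (fun τ' : ℝ => y * Real.exp (-(2 * τ' * y)⁻¹))
      (Real.exp (-(2 * τ * y)⁻¹) / (2 * τ ^ 2)) τ := by
  have hlin : HasDerivAt (fun τ' : ℝ => 2 * τ' * y) (2 * 1 * y) τ :=
    ((hasDerivAt_id τ).const_mul 2).mul_const y
  have hinv := hlin.inv (aux_ne τ y hy hτ)
  have hexp := hinv.neg.exp
  have h := hexp.const_mul y
  refine h.congr_deriv ?_
  simp only [Pi.neg_apply, Pi.inv_apply, id]
  have hτ0 : τ ≠ 0 := ne_of_gt hτ
  have hy0 : y ≠ 0 := ne_of_gt hy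
  field_simp

/-- there exists a nontrivial classical solution of
`w_τ = 2y³·w_yy` on `y > 0`, `τ > 0`, which vanishes as `τ → 0⁺` and has at
most linear growth `0 < w(y,τ) ≤ C·y`. Hence the zero-initial-data Cauchy
problem for this equation has a nontrivial solution of linear growth, so the
sublinear-growth uniqueness condition of Ekström–Tysk is sharp for `α = 3/2`. -/
theorem degenerate_equation_nonuniqueness_linear_growth :
    ∃ (w : ℝ → ℝ → ℝ) (C : ℝ), 0 < C ∧
      (∀ y τ : ℝ, 0 < y → 0 < τ →
        ∃ py pyy pτ : ℝ,
          HasDerivAt (fun y' => w y' τ) py y ∧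
          HasDerivAt (deriv fun y' => w y' τ) pyy y ∧
          HasDerivAt (fun τ' => w y τ') pτ τ ∧
          pτ = 2 * y ^ 3 * pyy) ∧
      (∀ y : ℝ, 0 < y →
        Tendsto (fun τ => w y τ) (𝓝[>] (0 : ℝ)) (𝓝 (0 : ℝ))) ∧
      (∀ y τ : ℝ, 0 < y → 0 < τ → 0 < w y τ ∧ w y τ ≤ C * y) ∧
      (∃ y τ : ℝ, 0 < y ∧ 0 < τ ∧ w y τ ≠ 0) := by
  refine ⟨fun y τ => y * Real.exp (-(2 * τ * y)⁻¹), 1, one_pos, ?_, ?_, ?_, ?_⟩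
  · -- the PDE
    intro y τ hy hτ
    refine ⟨_, Real.exp (-(2 * τ * y)⁻¹) / (4 * τ ^ 2 * y ^ 3), _,
        aux_dy τ y hy hτ, ?_, aux_dt τ y hy hτ, ?_⟩
    · -- second derivative: the derivative function agrees with the explicit formula near y
      have heq : (deriv fun y' => y' * Real.exp (-(2 * τ * y')⁻¹)) =ᶠ[𝓝 y]
          (fun y' => Real.exp (-(2 * τ * y')⁻¹) * (1 + (2 * τ * y')⁻¹)) := by
        filter_upwards [Ioi_mem_nhds hy] with z hz
        exact (aux_dy τ z hz hτ).deriv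
      exact (aux_dyy τ y hy hτ).congr_of_eventuallyEq heq
    · have hτ0 : τ ≠ 0 := ne_of_gt hτ
      have hy0 : y ≠ 0 := ne_of_gt hy
      field_simp
      ring
  · -- vanishing initial data
    intro y hy
    have h1 : Tendsto (fun τ : ℝ => 2 * τ * y) (𝓝[>] (0 : ℝ)) (𝓝[>] (0 : ℝ)) := by
      rw [tendsto_nhdsWithin_iff]
      constructor
      · have : Tendsto (fun τ : ℝ => 2 * τ * y) (𝓝 (0 : ℝ)) (𝓝 (2 * 0 * y)) := by
          exact ((continuous_const.mul continuous_id).mul continuous_const).tendsto 0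
        simpa using this.mono_left nhdsWithin_le_nhds
      · filter_upwards [self_mem_nhdsWithin] with τ (hτ : 0 < τ)
        exact mul_pos (mul_pos two_pos hτ) hy
    have h2 : Tendsto (fun τ : ℝ => -(2 * τ * y)⁻¹) (𝓝[>] (0 : ℝ)) atBot :=
      tendsto_neg_atTop_atBot.comp (tendsto_inv_nhdsGT_zero.comp h1)
    have h3 : Tendsto (fun τ : ℝ => Real.exp (-(2 * τ * y)⁻¹)) (𝓝[>] (0 : ℝ)) (𝓝 0) :=
      Real.tendsto_exp_atBot.comp h2
    simpa using h3.const_mul y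
  · intro y τ hy hτ
    constructor
    · positivity
    · rw [one_mul]
      nth_rewrite 2 [← mul_one y]
      refine mul_le_mul_of_nonneg_left ?_ hy.le
      rw [Real.exp_le_one_iff]
      have : (0:ℝ) < (2 * τ * y)⁻¹ := by positivity
      linarith
  · exact ⟨1, 1, one_pos, one_pos, by positivity⟩
end

section
/- There exists a not-identically-zero function Π : (0,∞) × [0,T] → ℝ (for any given σ > 0, r ≥ 0, T > 0), continuous on (0,∞) × [0,T], which is a classical solution of (vσ²/2)·Π_vv + σ²·Π_v + Π_t − rΠ = 0 at all v > 0, 0 ≤ t < T, and satisfies Π(v,T) = 0 for all v > 0. Hence the terminal value problem for this equation on v > 0 is not uniquely solvable among classical solutions without growth restrictions as v → 0. -/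
open Real Filter Topology

noncomputable def Pvol (σ r T : ℝ) : ℝ → ℝ → ℝ := fun v t =>
  if t < T then v⁻¹ * Real.exp (-(r*(T-t)) - 2*v/(σ^2*(T-t))) else 0

/-- for any `σ > 0`, `r ≥ 0`, `T > 0` there exists a
not-identically-zero function `Π : (0,∞) × [0,T] → ℝ`, continuous there,
which is a classical solution of `(vσ²/2)·Π_vv + σ²·Π_v + Π_t − rΠ = 0`
for `v > 0`, `0 ≤ t < T`, and satisfies `Π(v,T) = 0` for all `v > 0`.
Hence the terminal value problem is not uniquely solvable among classical
solutions without growth restrictions as `v → 0`. -/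
theorem volatility_equation_terminal_nonuniqueness (σ r T : ℝ) (hσ : 0 < σ)
    (hr : 0 ≤ r) (hT : 0 < T) :
    ∃ P : ℝ → ℝ → ℝ,
      ContinuousOn (fun p : ℝ × ℝ => P p.1 p.2)
        (Set.Ioi 0 ×ˢ Set.Icc 0 T) ∧
      (∀ v t : ℝ, 0 < v → 0 ≤ t → t < T →
        ∃ pv pvv pt : ℝ,
          HasDerivAt (fun v' => P v' t) pv v ∧
          HasDerivAt (deriv fun v' => P v' t) pvv v ∧
          HasDerivAt (fun t' => P v t') pt t ∧
          v * σ ^ 2 / 2 * pvv + σ ^ 2 * pv + pt - r * P v t = 0) ∧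
      (∀ v : ℝ, 0 < v → P v T = 0) ∧
      (∃ v t : ℝ, 0 < v ∧ 0 ≤ t ∧ t ≤ T ∧ P v t ≠ 0) := by
  refine ⟨Pvol σ r T, ?_, ?_, ?_, ?_⟩
  · -- continuity
      have hσ2 : (0:ℝ) < σ^2 := by positivity
      rintro ⟨v, t⟩ ⟨hv, ht0, htT⟩
      simp only [Set.mem_Ioi] at hv
      rcases lt_or_eq_of_le htT with hlt | heq
      · -- interior in time: locally the smooth formula
        have hne : σ^2 * (T - t) ≠ 0 := by
          have : 0 < T - t := sub_pos.2 hlt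
          positivity
        have hQ : ContinuousAt (fun p : ℝ × ℝ =>
            p.1⁻¹ * Real.exp (-(r*(T-p.2)) - 2*p.1/(σ^2*(T-p.2)))) (v, t) := by
          refine ContinuousAt.mul (continuous_fst.continuousAt.inv₀ hv.ne') ?_
          refine (Real.continuous_exp.continuousAt.comp ?_)
          exact ((continuousAt_const.mul (continuousAt_const.sub continuous_snd.continuousAt)).neg).sub
            (((continuousAt_const.mul continuous_fst.continuousAt)).div
              (continuousAt_const.mul (continuousAt_const.sub continuous_snd.continuousAt)) hne)
        have hmem : {p : ℝ × ℝ | p.2 < T} ∈ 𝓝 (v, t) :=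
          (isOpen_Iio.preimage continuous_snd).mem_nhds hlt
        refine (hQ.congr ?_).continuousWithinAt
        filter_upwards [hmem] with p hp
        simp [Pvol, if_pos hp]
      · -- t = T : show tendsto to 0
        subst heq
        have hPT : Pvol σ r t v t = 0 := by simp [Pvol]
        rw [ContinuousWithinAt, hPT]
        set S := Set.Ioi (0:ℝ) ×ˢ Set.Icc 0 t with hS
        have hsub : S ⊆ (S ∩ {p : ℝ × ℝ | p.2 < t}) ∪ (S ∩ {p : ℝ × ℝ | p.2 = t}) := by
          rintro ⟨x, s⟩ hp
          rcases lt_or_eq_of_le hp.2.2 with h | h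
          · exact Or.inl ⟨hp, h⟩
          · exact Or.inr ⟨hp, h⟩
        have hle : 𝓝[S] (v, t) ≤
            𝓝[S ∩ {p : ℝ × ℝ | p.2 < t}] (v, t) ⊔ 𝓝[S ∩ {p : ℝ × ℝ | p.2 = t}] (v, t) := by
          rw [← nhdsWithin_union]
          exact nhdsWithin_mono _ hsub
        refine Filter.Tendsto.mono_left ?_ hle
        rw [tendsto_sup]
        constructor
        · -- within t' < t
          set L := 𝓝[S ∩ {p : ℝ × ℝ | p.2 < t}] ((v:ℝ), t) with hL
          have hmemL : ∀ᶠ p in L, p ∈ S ∩ {p : ℝ × ℝ | p.2 < t} := self_mem_nhdsWithin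
          have htend1 : Tendsto (fun p : ℝ × ℝ => -(r*(t-p.2))) L (𝓝 0) := by
            have : Tendsto (fun p : ℝ × ℝ => -(r*(t-p.2))) (𝓝 ((v:ℝ), t)) (𝓝 (-(r*(t-t)))) := by
              exact ((continuous_const.mul (continuous_const.sub continuous_snd)).neg).continuousAt
            simpa using this.mono_left nhdsWithin_le_nhds
          have hden0 : Tendsto (fun p : ℝ × ℝ => σ^2*(t-p.2)) L (𝓝[>] 0) := by
            rw [tendsto_nhdsWithin_iff]
            constructor
            · have : Tendsto (fun p : ℝ × ℝ => σ^2*(t-p.2)) (𝓝 ((v:ℝ), t)) (𝓝 (σ^2*(t-t))) :=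
                ((continuous_const.mul (continuous_const.sub continuous_snd))).continuousAt
              simpa using this.mono_left nhdsWithin_le_nhds
            · filter_upwards [hmemL] with p hp
              have : 0 < t - p.2 := sub_pos.2 hp.2
              exact mul_pos hσ2 this
          have hinv : Tendsto (fun p : ℝ × ℝ => (σ^2*(t-p.2))⁻¹) L atTop :=
            tendsto_inv_nhdsGT_zero.comp hden0
          have hnum : Tendsto (fun p : ℝ × ℝ => 2*p.1) L (𝓝 (2*v)) :=
            ((continuous_const.mul continuous_fst).continuousAt).mono_left nhdsWithin_le_nhds
          have hfrac : Tendsto (fun p : ℝ × ℝ => 2*p.1 * (σ^2*(t-p.2))⁻¹) L atTop :=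
            hnum.pos_mul_atTop (by positivity) hinv
          have hexpo : Tendsto (fun p : ℝ × ℝ => -(r*(t-p.2)) - 2*p.1/(σ^2*(t-p.2))) L atBot := by
            have : Tendsto (fun p : ℝ × ℝ => 2*p.1/(σ^2*(t-p.2))) L atTop := by
              simpa [div_eq_mul_inv] using hfrac
            have hneg : Tendsto (fun p : ℝ × ℝ => -(2*p.1/(σ^2*(t-p.2)))) L atBot :=
              tendsto_neg_atBot_iff.2 this
            simpa [sub_eq_add_neg] using htend1.add_atBot hneg
          have hexp0 : Tendsto (fun p : ℝ × ℝ =>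
              Real.exp (-(r*(t-p.2)) - 2*p.1/(σ^2*(t-p.2)))) L (𝓝 0) :=
            Real.tendsto_exp_atBot.comp hexpo
          have hinvv0 : ContinuousAt (fun p : ℝ × ℝ => p.1⁻¹) (v, t) :=
            continuous_fst.continuousAt.inv₀ hv.ne'
          have hinvv : Tendsto (fun p : ℝ × ℝ => p.1⁻¹) L (𝓝 v⁻¹) :=
            hinvv0.mono_left nhdsWithin_le_nhds
          have := hinvv.mul hexp0
          rw [mul_zero] at this
          refine this.congr' ?_
          filter_upwards [hmemL] with p hp
          exact (if_pos hp.2).symm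
        · -- within t' = t
          refine Tendsto.congr' ?_ tendsto_const_nhds
          filter_upwards [self_mem_nhdsWithin] with p hp
          have : ¬ p.2 < t := by rw [hp.2]; exact lt_irrefl t
          simp [Pvol, this]
  · -- the PDE
    intro v t hv ht htT
    have hs : 0 < T - t := sub_pos.2 htT
    have hσ2 : (0:ℝ) < σ^2 := by positivity
    have hAs : σ^2 * (T - t) ≠ 0 := by positivity
    set b : ℝ := -(2/(σ^2*(T-t))) with hbdef
    set g : ℝ → ℝ := fun x => -(r*(T-t)) - 2*x/(σ^2*(T-t)) with hgdef
    have hfx : (fun v' => Pvol σ r T v' t) = fun v' => v'⁻¹ * Real.exp (g v') := by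
      funext x; simp [Pvol, if_pos htT, hgdef]
    have hg : ∀ x : ℝ, HasDerivAt g b x := by
      intro x
      have h1 : HasDerivAt (fun v' : ℝ => 2*v'/(σ^2*(T-t))) (2/(σ^2*(T-t))) x := by
        simpa using ((hasDerivAt_id x).const_mul 2).div_const (σ^2*(T-t))
      simpa [hgdef, hbdef, sub_eq_add_neg] using h1.neg.const_add (-(r*(T-t)))
    have hexp : ∀ x : ℝ, HasDerivAt (fun y => Real.exp (g y)) (Real.exp (g x) * b) x :=
      fun x => (hg x).exp
    have hF : ∀ x : ℝ, x ≠ 0 → HasDerivAt (fun y => y⁻¹ * Real.exp (g y))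
        (-(x^2)⁻¹ * Real.exp (g x) + x⁻¹ * (Real.exp (g x) * b)) x :=
      fun x hx => (hasDerivAt_inv hx).mul (hexp x)
    set D : ℝ → ℝ := fun x => -(x^2)⁻¹ * Real.exp (g x) + x⁻¹ * (Real.exp (g x) * b) with hDdef
    -- second derivative in v
    have hsq : HasDerivAt (fun x : ℝ => -(x^2)⁻¹) (-(-(↑2 * v ^ 1) / (v^2)^2)) v :=
      ((hasDerivAt_pow 2 v).inv (pow_ne_zero 2 hv.ne')).neg
    have hterm1 : HasDerivAt (fun x : ℝ => -(x^2)⁻¹ * Real.exp (g x))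
        ((-(-(↑2 * v ^ 1) / (v^2)^2)) * Real.exp (g v) + (-(v^2)⁻¹) * (Real.exp (g v) * b)) v :=
      hsq.mul (hexp v)
    have hterm2 : HasDerivAt (fun x : ℝ => x⁻¹ * (Real.exp (g x) * b))
        ((-(v^2)⁻¹) * (Real.exp (g v) * b) + v⁻¹ * ((Real.exp (g v) * b) * b)) v :=
      (hasDerivAt_inv hv.ne').mul ((hexp v).mul_const b)
    have hD2 : HasDerivAt D
        (((-(-(↑2 * v ^ 1) / (v^2)^2)) * Real.exp (g v) + (-(v^2)⁻¹) * (Real.exp (g v) * b)) +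
         ((-(v^2)⁻¹) * (Real.exp (g v) * b) + v⁻¹ * ((Real.exp (g v) * b) * b))) v :=
      hterm1.add hterm2
    have hderiveq : (deriv fun v' => Pvol σ r T v' t) =ᶠ[𝓝 v] D := by
      rw [hfx]
      filter_upwards [eventually_ne_nhds hv.ne'] with x hx
      exact (hF x hx).deriv
    -- time derivative
    have hTm : ∀ᶠ t' in 𝓝 t, t' < T := Iio_mem_nhds htT
    have hden : HasDerivAt (fun t' : ℝ => σ^2*(T-t')) (-σ^2) t := by
      simpa using ((hasDerivAt_id t).const_sub T).const_mul (σ^2)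
    have hlin : HasDerivAt (fun t' : ℝ => -(r*(T-t'))) r t := by
      simpa using (((hasDerivAt_id t).const_sub T).const_mul r).fun_neg
    have hfrac : HasDerivAt (fun t' : ℝ => 2*v/(σ^2*(T-t')))
        ((0 * (σ^2*(T-t)) - 2*v * (-σ^2)) / (σ^2*(T-t))^2) t :=
      (hasDerivAt_const t (2*v)).div hden hAs
    have hexpo : HasDerivAt (fun t' : ℝ => -(r*(T-t')) - 2*v/(σ^2*(T-t')))
        (r - (0 * (σ^2*(T-t)) - 2*v * (-σ^2)) / (σ^2*(T-t))^2) t := hlin.sub hfrac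
    have hht : HasDerivAt (fun t' : ℝ => v⁻¹ * Real.exp (-(r*(T-t')) - 2*v/(σ^2*(T-t'))))
        (v⁻¹ * (Real.exp (-(r*(T-t)) - 2*v/(σ^2*(T-t))) *
          (r - (0 * (σ^2*(T-t)) - 2*v * (-σ^2)) / (σ^2*(T-t))^2))) t :=
      (hexpo.exp).const_mul v⁻¹
    have hPt : HasDerivAt (fun t' => Pvol σ r T v t')
        (v⁻¹ * (Real.exp (-(r*(T-t)) - 2*v/(σ^2*(T-t))) *
          (r - (0 * (σ^2*(T-t)) - 2*v * (-σ^2)) / (σ^2*(T-t))^2))) t := by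
      refine hht.congr_of_eventuallyEq ?_
      filter_upwards [hTm] with x hx
      simp [Pvol, if_pos hx]
    refine ⟨_, _, _, by rw [hfx]; exact hF v hv.ne', hD2.congr_of_eventuallyEq hderiveq, hPt, ?_⟩
    have hPv : Pvol σ r T v t = v⁻¹ * Real.exp (g v) := by simp [Pvol, if_pos htT, hgdef]
    rw [hPv]
    simp only [hgdef, hbdef]
    have hE : Real.exp (-(r*(T-t)) - 2*v/(σ^2*(T-t))) ≠ 0 := Real.exp_ne_zero _
    field_simp
    ring
  · intro v hv
    simp [Pvol]
  · refine ⟨1, 0, one_pos, le_refl 0, hT.le, ?_⟩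
    simp [Pvol, hT, Real.exp_ne_zero]
end
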